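/- arXiv:1611.06808 — 3 statements merged into one kernel-verified Lean document; each statement's English description precedes it below -/
import Mathlib

section
/- Let P(x) = ∏_{j=1}^{k}(x² - x_j²)^{2n+2} with 0 < x_k < ⋯ < x_1 and set m = 2s(2n+2) for some s ≤ k. Then |P^{(m)}(0)| ≥ ∏_{j=1}^{k-s} x_j^{2(2n+2)}. -/
/-!
Substituting `u = t²`, the function is `q(t²)` for `q = ∏ⱼ (u - xⱼ²)^(2n+2)`, so its `m`-th derivative
at `0`, `m = 2s(2n+2)`, is `m!` times the coefficient of `u^(s(2n+2))` in `q`. By Vieta that coefficient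
is, up to sign, an elementary symmetric function of the roots `xⱼ²` of `q` (with multiplicity); all its
terms are nonnegative, so it dominates the single term coming from the roots `x₁², …, x_{k-s}²`.
-/

open Finset Polynomial

namespace Polynomial

theorem iteratedDeriv_eval (p : ℝ[X]) (m : ℕ) :
    iteratedDeriv m (fun t => p.eval t) = fun t => (derivative^[m] p).eval t := by
  induction m with
  | zero => simp
  | succ m ih =>
    rw [iteratedDeriv_succ, ih, Function.iterate_succ_apply']
    funext t
    exact Polynomial.deriv _

theorem iteratedDeriv_eval_zero (p : ℝ[X]) (m : ℕ) :
    iteratedDeriv m (fun t => p.eval t) 0 = m.factorial * p.coeff m := by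
  simp only [iteratedDeriv_eval]
  rw [← coeff_zero_eq_eval_zero, coeff_iterate_derivative, zero_add, Nat.descFactorial_self,
    nsmul_eq_mul]

end Polynomial

namespace Multiset

theorem prod_le_esymm {R : Type*} [CommSemiring R] [PartialOrder R] [IsOrderedRing R]
    {s t : Multiset R} (hs : ∀ a ∈ s, 0 ≤ a) (hts : t ≤ s) : t.prod ≤ s.esymm (card t) := by
  refine single_le_sum (fun y hy => ?_) _ (mem_map_of_mem _ (mem_powersetCard.mpr ⟨hts, rfl⟩))
  obtain ⟨u, hu, rfl⟩ := mem_map.mp hy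
  exact prod_nonneg fun a ha => hs a (mem_of_le (mem_powersetCard.mp hu).1 ha)

theorem prod_le_abs_coeff_prod_X_sub_C {R : Type*} [CommRing R] [LinearOrder R] [IsOrderedRing R]
    {s t : Multiset R} (hs : ∀ a ∈ s, 0 ≤ a) (hts : t ≤ s) :
    t.prod ≤ |(s.map fun a => X - C a).prod.coeff (card s - card t)| := by
  rw [prod_X_sub_C_coeff s tsub_le_self, Nat.sub_sub_self (card_le_card hts), abs_mul, abs_pow,
    abs_neg, abs_one, one_pow, one_mul]
  exact (prod_le_esymm hs hts).trans (le_abs_self _)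

end Multiset

theorem Finset.prod_pow_le_abs_coeff_prod_X_sub_C_pow {ι R : Type*} [CommRing R] [LinearOrder R]
    [IsOrderedRing R] {S T : Finset ι} (a : ι → R) (ha : ∀ i ∈ S, 0 ≤ a i) (hTS : T ⊆ S) (N : ℕ) :
    (∏ i ∈ T, a i) ^ N ≤ |((∏ i ∈ S, (X - C (a i))) ^ N).coeff ((#S - #T) * N)| := by
  have key := Multiset.prod_le_abs_coeff_prod_X_sub_C (s := N • S.val.map a)
    (t := N • T.val.map a) (fun b hb => by
      obtain ⟨i, hi, rfl⟩ := Multiset.mem_map.mp (Multiset.mem_of_mem_nsmul hb)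
      exact ha i hi)
    (nsmul_le_nsmul_right (Multiset.map_le_map (val_le_iff.mpr hTS)) N)
  simpa [Multiset.prod_nsmul, Multiset.map_nsmul, Nat.mul_sub, mul_comm] using key

theorem stmt_9_general (n k s : ℕ) (hsk : s ≤ k) (x : ℕ → ℝ) :
    ∏ j ∈ Finset.Icc 1 (k - s), x j ^ (2 * (2 * n + 2)) ≤
      |iteratedDeriv (2 * s * (2 * n + 2))
        (fun t : ℝ => ∏ j ∈ Finset.Icc 1 k, (t ^ 2 - x j ^ 2) ^ (2 * n + 2)) 0| := by
  set N := 2 * n + 2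
  set q : ℝ[X] := (∏ j ∈ Icc 1 k, (X - C (x j ^ 2))) ^ N
  have hP : (fun t : ℝ => ∏ j ∈ Icc 1 k, (t ^ 2 - x j ^ 2) ^ N) =
      fun t => (expand ℝ 2 q).eval t := by
    funext t
    simp [q, eval_prod, prod_pow]
  have hcard : #(Icc 1 k) - #(Icc 1 (k - s)) = s := by simp only [Nat.card_Icc]; omega
  have hcoeff := prod_pow_le_abs_coeff_prod_X_sub_C_pow (fun j => x j ^ 2)
    (fun j _ => sq_nonneg (x j)) (Icc_subset_Icc_right (a := 1) (Nat.sub_le k s)) N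
  rw [hcard] at hcoeff
  rw [hP, iteratedDeriv_eval_zero, mul_assoc 2 s N, coeff_expand_mul' two_pos, abs_mul,
    Nat.abs_cast]
  calc ∏ j ∈ Icc 1 (k - s), x j ^ (2 * N)
      = (∏ j ∈ Icc 1 (k - s), x j ^ 2) ^ N := by simp only [pow_mul, prod_pow]
    _ ≤ |q.coeff (s * N)| := hcoeff
    _ ≤ _ := le_mul_of_one_le_left (abs_nonneg _) (by exact_mod_cast (2 * (s * N)).factorial_pos)

/-- Let `P x = ∏_{j=1}^{k} (x² - x_j²)^(2n+2)` with `0 < x k < ⋯ < x 1` and set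
`m = 2s(2n+2)` for some `1 ≤ s ≤ k`. Then `|P^{(m)}(0)| ≥ ∏_{j=1}^{k-s} x j ^ (2(2n+2))`. -/
theorem stmt_9 (n k s : ℕ) (hs : 1 ≤ s) (hsk : s ≤ k) (x : ℕ → ℝ) (hpos : 0 < x k)
    (hanti : ∀ i j, 1 ≤ i → i < j → j ≤ k → x j < x i) :
    ∏ j ∈ Finset.Icc 1 (k - s), x j ^ (2 * (2 * n + 2)) ≤
      |iteratedDeriv (2 * s * (2 * n + 2))
        (fun t : ℝ => ∏ j ∈ Finset.Icc 1 k, (t ^ 2 - x j ^ 2) ^ (2 * n + 2)) 0| :=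
  stmt_9_general n k s hsk x
end

section
/- Let y_0, …, y_k be distinct real numbers and P a polynomial of degree ≤ k. Writing P in Lagrange form, for every j ≤ m ≤ k and every point t, |P^{(j)}(t)| ≤ C(k) · (max_{0≤i,ν≤k}|y_i - y_ν|)^{k-j} / (min_{i≠ν}|y_i - y_ν|)^k · max_{0≤ν≤k}|P(y_ν)|, for some constant C(k) depending only on k, provided t lies in the interval spanned by the y_i. -/
open Finset Polynomial

/-!
Write `P` in Lagrange form on the nodes `y 0, …, y k`. The `ν`-th basis polynomial is
`∏_{i ≠ ν} (X - y i)` times the scalar `∏_{i ≠ ν} (y ν - y i)⁻¹`, which is at most `d⁻ᵏ`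
in absolute value. Differentiating a product of `k` linear factors `j` times gives at most `kʲ`
products of `k - j` of them, each at most `Dᵏ⁻ʲ` on `[y 0, y k]`. Summing over the `k + 1`
nodes gives the bound with `C = (k + 1)ᵏ⁺¹`.
-/

section

variable {ι : Type*} [DecidableEq ι]

theorem derivative_prod_X_sub_C {R : Type*} [CommRing R] (s : Finset ι) (y : ι → R) :
    derivative (∏ i ∈ s, (X - C (y i))) = ∑ i ∈ s, ∏ l ∈ s.erase i, (X - C (y l)) := by
  simp_rw [derivative_prod_finset, derivative_X_sub_C, mul_one]

theorem abs_eval_iterate_derivative_prod_X_sub_C_le {t D : ℝ} (hD : 0 ≤ D) (j : ℕ)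
    (s : Finset ι) (y : ι → ℝ) (hy : ∀ i ∈ s, |t - y i| ≤ D) :
    |(derivative^[j] (∏ i ∈ s, (X - C (y i)))).eval t| ≤ (#s : ℝ) ^ j * D ^ (#s - j) := by
  induction j generalizing s with
  | zero =>
    simp only [Function.iterate_zero, id, eval_prod, eval_sub, eval_X, eval_C, abs_prod,
      pow_zero, one_mul, Nat.sub_zero]
    exact (prod_le_prod (fun _ _ => abs_nonneg _) hy).trans_eq (prod_const D)
  | succ j ih =>
    rw [Function.iterate_succ_apply, derivative_prod_X_sub_C, iterate_derivative_sum,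
      eval_finsetSum]
    calc _ ≤ ∑ i ∈ s, |(derivative^[j] (∏ l ∈ s.erase i, (X - C (y l)))).eval t| :=
          abs_sum_le_sum_abs _ _
      _ ≤ ∑ _i ∈ s, (#s : ℝ) ^ j * D ^ (#s - (j + 1)) := sum_le_sum fun i hi => by
          have h := ih (s.erase i) fun l hl => hy l (mem_of_mem_erase hl)
          rw [card_erase_of_mem hi, Nat.sub_sub, add_comm 1 j] at h
          refine h.trans (mul_le_mul_of_nonneg_right ?_ (by positivity))
          gcongr
          exact Nat.sub_le _ _
      _ = (#s : ℝ) ^ (j + 1) * D ^ (#s - (j + 1)) := by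
          rw [sum_const, nsmul_eq_mul, pow_succ]; ring

theorem Lagrange.basis_eq_C_mul_prod {F : Type*} [Field F] (s : Finset ι) (v : ι → F)
    (i : ι) :
    Lagrange.basis s v i =
      C (∏ l ∈ s.erase i, (v i - v l)⁻¹) * ∏ l ∈ s.erase i, (X - C (v l)) := by
  simp only [Lagrange.basis, Lagrange.basisDivisor, prod_mul_distrib, map_prod]

variable {s : Finset ι} {v : ι → ℝ} {t d D : ℝ}

theorem abs_eval_iterate_derivative_basis_le {i : ι} (hi : i ∈ s) (hd : 0 < d) (hD : 0 ≤ D)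
    (hsep : ∀ l ∈ s, l ≠ i → d ≤ |v i - v l|) (ht : ∀ l ∈ s, |t - v l| ≤ D) (j : ℕ) :
    |(derivative^[j] (Lagrange.basis s v i)).eval t| ≤
      ((#s - 1 : ℕ) : ℝ) ^ j * D ^ (#s - 1 - j) / d ^ (#s - 1) := by
  have hcard : #(s.erase i) = #s - 1 := card_erase_of_mem hi
  have hcoeff : |∏ l ∈ s.erase i, (v i - v l)⁻¹| ≤ (d ^ (#s - 1))⁻¹ := by
    rw [abs_prod, ← hcard, ← inv_pow, ← prod_const]
    refine prod_le_prod (fun _ _ => abs_nonneg _) fun l hl => ?_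
    rw [abs_inv]
    exact inv_anti₀ hd (hsep l (mem_of_mem_erase hl) (ne_of_mem_erase hl))
  have hprod := abs_eval_iterate_derivative_prod_X_sub_C_le hD j (s.erase i) v
    fun l hl => ht l (mem_of_mem_erase hl)
  rw [hcard] at hprod
  rw [Lagrange.basis_eq_C_mul_prod, iterate_derivative_C_mul, eval_mul, eval_C, abs_mul,
    div_eq_inv_mul]
  exact mul_le_mul hcoeff hprod (abs_nonneg _) (by positivity)

theorem abs_eval_iterate_derivative_le_of_degree_lt {P : ℝ[X]} {M : ℝ} (hP : P.degree < #s)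
    (hd : 0 < d) (hD : 0 ≤ D) (hsep : ∀ i ∈ s, ∀ l ∈ s, i ≠ l → d ≤ |v i - v l|)
    (ht : ∀ l ∈ s, |t - v l| ≤ D) (hM : ∀ i ∈ s, |P.eval (v i)| ≤ M) (j : ℕ) :
    |(derivative^[j] P).eval t| ≤
      #s * M * (((#s - 1 : ℕ) : ℝ) ^ j * D ^ (#s - 1 - j) / d ^ (#s - 1)) := by
  have hvs : Set.InjOn v s := fun i hi l hl hvil => by
    by_contra hne
    have := hsep i hi l hl hne
    rw [hvil, sub_self, abs_zero] at this
    exact this.not_gt hd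
  rw [Lagrange.eq_interpolate hvs hP, Lagrange.interpolate_apply, iterate_derivative_sum,
    eval_finsetSum]
  calc _ ≤ ∑ i ∈ s, |P.eval (v i)| * |(derivative^[j] (Lagrange.basis s v i)).eval t| := by
        refine (abs_sum_le_sum_abs _ _).trans_eq (sum_congr rfl fun i _ => ?_)
        rw [iterate_derivative_C_mul, eval_mul, eval_C, abs_mul]
    _ ≤ ∑ _i ∈ s, M * (((#s - 1 : ℕ) : ℝ) ^ j * D ^ (#s - 1 - j) / d ^ (#s - 1)) :=
        sum_le_sum fun i hi => mul_le_mul (hM i hi)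
          (abs_eval_iterate_derivative_basis_le hi hd hD
            (fun l hl hli => hsep i hi l hl (Ne.symm hli)) ht j)
          (abs_nonneg _) ((abs_nonneg _).trans (hM i hi))
    _ = _ := by rw [sum_const, nsmul_eq_mul, mul_assoc]

end

/-- Lagrange-interpolation bound: for distinct nodes `y 0 < ⋯ < y k`, a polynomial `P` of
degree ≤ `k`, and `j ≤ m ≤ k`, there is a constant `C` depending only on `k` such that for
`t ∈ [y 0, y k]`,
`|P^{(j)}(t)| ≤ C * D^(k-j) / d^k * max_ν |P(y ν)|`,
where `D` is the maximal and `d` the minimal distance between distinct nodes. -/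
theorem stmt_10 (k : ℕ) :
    ∃ C : ℝ, 0 < C ∧
      ∀ (y : ℕ → ℝ), (∀ i j, i < j → j ≤ k → y i < y j) →
      ∀ P : Polynomial ℝ, P.natDegree ≤ k →
      ∀ m ≤ k, ∀ j ≤ m, ∀ t ∈ Set.Icc (y 0) (y k),
      ∀ D d : ℝ, 0 < d →
        (∀ i ν, i ≤ k → ν ≤ k → |y i - y ν| ≤ D) →
        (∀ i ν, i ≤ k → ν ≤ k → i ≠ ν → d ≤ |y i - y ν|) →
        |((Polynomial.derivative)^[j] P).eval t| ≤
          C * D ^ (k - j) / d ^ k *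
            (Finset.Icc 0 k).sup' (by simp) (fun ν => |P.eval (y ν)|) := by
  refine ⟨((k : ℝ) + 1) ^ (k + 1), by positivity, ?_⟩
  intro y hy P hP m hm j hj t ht D d hd hD hsep
  set M := (Icc 0 k).sup' ⟨0, by simp⟩ fun ν => |P.eval (y ν)|
  have hMle : ∀ ν ∈ Icc 0 k, |P.eval (y ν)| ≤ M := fun ν hν =>
    le_sup' (fun ν => |P.eval (y ν)|) hν
  have hM : 0 ≤ M := (abs_nonneg _).trans (hMle 0 (by simp))
  have hD0 : 0 ≤ D := (abs_nonneg _).trans (hD 0 0 k.zero_le k.zero_le)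
  have hcard : #(Icc 0 k) = k + 1 := by simp
  have hdeg : P.degree < #(Icc 0 k) :=
    degree_le_natDegree.trans_lt (by rw [hcard]; exact_mod_cast Nat.lt_succ_of_le hP)
  have hnode : ∀ l ∈ Icc 0 k, y l ∈ Set.Icc (y 0) (y k) := fun l hl => by
    have hlk : l ≤ k := (mem_Icc.mp hl).2
    exact ⟨(Nat.eq_zero_or_pos l).elim (fun h => h ▸ le_rfl) fun h => (hy 0 l h hlk).le,
      hlk.eq_or_lt.elim (fun h => h ▸ le_rfl) fun h => (hy l k h le_rfl).le⟩
  have hdist : ∀ l ∈ Icc 0 k, |t - y l| ≤ D := fun l hl =>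
    (Real.dist_le_of_mem_uIcc (Set.Icc_subset_uIcc ht) (Set.Icc_subset_uIcc (hnode l hl))).trans
      (hD 0 k k.zero_le le_rfl)
  have hbound := abs_eval_iterate_derivative_le_of_degree_lt hdeg hd hD0
    (fun i hi l hl => hsep i l (mem_Icc.mp hi).2 (mem_Icc.mp hl).2) hdist hMle j
  simp only [hcard, Nat.add_sub_cancel] at hbound
  have hpow : (k : ℝ) ^ j ≤ ((k : ℝ) + 1) ^ k :=
    (pow_le_pow_left₀ k.cast_nonneg (by linarith) j).trans
      (pow_le_pow_right₀ (by linarith) (hj.trans hm))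
  calc _ ≤ _ := hbound
    _ = ((k : ℝ) + 1) * k ^ j * (D ^ (k - j) / d ^ k * M) := by push_cast; ring
    _ ≤ ((k : ℝ) + 1) * (k + 1) ^ k * (D ^ (k - j) / d ^ k * M) := by gcongr
    _ = _ := by ring
end

section
/- Leibniz rule for divided differences: for functions f, g : ℝ → ℝ and distinct points y_0, …, y_n, (fg)[y_0,…,y_n] = ∑_{j=0}^{n} f[y_0,…,y_j] · g[y_j,…,y_n]. -/
open Finset

/-- The divided difference `divDiff f y i s = f[y i, y (i+1), …, y (i+s)]`, defined by the
usual recursion for (distinct) nodes. -/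
noncomputable def divDiff (f : ℝ → ℝ) (y : ℕ → ℝ) : ℕ → ℕ → ℝ
  | i, 0 => f (y i)
  | i, s + 1 => (divDiff f y i s - divDiff f y (i + 1) s) / (y i - y (i + s + 1))

/-! Induction on the order. Writing `f[i, s]` for `divDiff f y i s`, the recursion
`(y i - y (i+s+1)) f[i, s+1] = f[i, s] - f[i+1, s]` trades `f[i+1, j]` for `f[i, j]` and
`g[i+j, s-j]` for `g[i+j+1, s-j]`, each at the cost of a divided difference of one order more.
The difference of the order-`s` Leibniz sums at `i` and `i + 1` thereby becomes
`y i - y (i+s+1)` times the first `s + 1` terms of the order-`s+1` sum, plus the telescoping sum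
of `a j = f[i, j] g[i+j, s+1-j] (y i - y (i+j))`; since `a 0 = 0`, it contributes exactly the
missing last term. -/

lemma divDiff_succ_mul_sub (f : ℝ → ℝ) (y : ℕ → ℝ) {i s : ℕ}
    (h : y i ≠ y (i + s + 1)) :
    divDiff f y i (s + 1) * (y i - y (i + s + 1)) = divDiff f y i s - divDiff f y (i + 1) s :=
  div_mul_cancel₀ _ (sub_ne_zero.mpr h)

theorem divDiff_mul (f g : ℝ → ℝ) (y : ℕ → ℝ) {i s : ℕ}
    (hy : Set.InjOn y (Set.Icc i (i + s))) :
    divDiff (fun t => f t * g t) y i s =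
      ∑ j ∈ range (s + 1), divDiff f y i j * divDiff g y (i + j) (s - j) := by
  induction s generalizing i with
  | zero => simp [divDiff]
  | succ s ih =>
    have node {a b : ℕ} (ha : i ≤ a) (hab : a < b) (hb : b ≤ i + (s + 1)) : y a ≠ y b :=
      fun h => hab.ne (hy ⟨ha, by omega⟩ ⟨by omega, hb⟩ h)
    have hd : y i - y (i + s + 1) ≠ 0 := sub_ne_zero.mpr (node le_rfl (by omega) (by omega))
    set a : ℕ → ℝ := fun j =>
      divDiff f y i j * divDiff g y (i + j) (s + 1 - j) * (y i - y (i + j)) with ha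
    have step : ∀ j ∈ range (s + 1),
        divDiff f y i j * divDiff g y (i + j) (s - j)
          - divDiff f y (i + 1) j * divDiff g y (i + 1 + j) (s - j)
        = (y i - y (i + s + 1)) * (divDiff f y i j * divDiff g y (i + j) (s + 1 - j))
          + (a (j + 1) - a j) := by
      intro j hj
      have hj : j ≤ s := Nat.lt_succ_iff.mp (mem_range.mp hj)
      have hf := divDiff_succ_mul_sub f y (i := i) (s := j) (node le_rfl (by omega) (by omega))
      have hg := divDiff_succ_mul_sub g y (i := i + j) (s := s - j)
        (node (by omega) (by omega) (by omega))
      rw [show i + j + (s - j) + 1 = i + s + 1 by omega] at hg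
      simp only [ha, show s + 1 - (j + 1) = s - j by omega, show s + 1 - j = s - j + 1 by omega,
        show i + (j + 1) = i + j + 1 by omega, show i + 1 + j = i + j + 1 by omega]
      linear_combination -divDiff f y i j * hg - divDiff g y (i + j + 1) (s - j) * hf
    rw [divDiff, ih (hy.mono (Set.Icc_subset_Icc le_rfl (by omega))),
      ih (i := i + 1) (hy.mono (Set.Icc_subset_Icc (by omega) (by omega))), div_eq_iff hd,
      ← sum_sub_distrib, sum_congr rfl step, sum_add_distrib, ← mul_sum, sum_range_sub,
      sum_range_succ _ (s + 1)]
    simp only [ha, ← add_assoc, add_zero, sub_self, mul_zero, sub_zero]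
    ring

/-- Leibniz rule for divided differences: for `f, g : ℝ → ℝ` and distinct points
`y 0, …, y n`, `(fg)[y 0,…,y n] = ∑_{j=0}^{n} f[y 0,…,y j] * g[y j,…,y n]`. -/
theorem stmt_16 (f g : ℝ → ℝ) (n : ℕ) (y : ℕ → ℝ)
    (hdist : ∀ i j, i ≤ n → j ≤ n → i ≠ j → y i ≠ y j) :
    divDiff (fun t => f t * g t) y 0 n =
      ∑ j ∈ Finset.range (n + 1), divDiff f y 0 j * divDiff g y j (n - j) := by
  have hy : Set.InjOn y (Set.Icc 0 (0 + n)) := fun a ha b hb hab =>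
    by_contra fun hne => hdist a b (by simpa using ha.2) (by simpa using hb.2) hne hab
  simpa using divDiff_mul f g y hy
end
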